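/- The operator S := (1/d)α_d + (1+1/d)σ_d on ℂ^d⊗ℂ^d satisfies: (i) S ∈ cone(S) (since S = (1/d)(α_d+σ_d) + σ_d and both σ_d and (α_d+σ_d)/2 are separable); (ii) S^Γ + α_d^Γ = (2/(d(d−1)))(𝟙−Φ) ≥ 0 and S^Γ − α_d^Γ = (2/d)Φ ≥ 0, where Φ is the maximally entangled state; (iii) Tr S = 1 + 2/d. Consequently Ẽ_κ(α_d) ≤ log₂(1 + 2/d). -/

import Mathlib

open Matrix BigOperators
open scoped Kronecker ComplexOrder

noncomputable section

abbrev BOp (d : ℕ) := Matrix (Fin d × Fin d) (Fin d × Fin d) ℂ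

/-- Loewner order: `A ≤ B` iff `B - A` is positive semidefinite. -/
def loe {n : Type*} [Fintype n] (A B : Matrix n n ℂ) : Prop := (B - A).PosSemidef

/-- A density operator: positive semidefinite with unit trace. -/
def IsState {n : Type*} [Fintype n] [DecidableEq n] (ρ : Matrix n n ℂ) : Prop :=
  ρ.PosSemidef ∧ ρ.trace = 1

/-- Separable bipartite state (convex combination of product states). -/
def IsSep {a b : Type*} [Fintype a] [DecidableEq a] [Fintype b] [DecidableEq b]
    (ρ : Matrix (a × b) (a × b) ℂ) : Prop :=
  ∃ (m : ℕ) (p : Fin m → ℝ) (A : Fin m → Matrix a a ℂ) (B : Fin m → Matrix b b ℂ),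
    (∀ i, 0 ≤ p i) ∧ (∑ i, p i) = 1 ∧
    (∀ i, IsState (A i)) ∧ (∀ i, IsState (B i)) ∧
    ρ = ∑ i, ((p i : ℝ) : ℂ) • (A i ⊗ₖ B i)

/-- The cone generated by separable states. -/
def InSepCone {a b : Type*} [Fintype a] [DecidableEq a] [Fintype b] [DecidableEq b]
    (S : Matrix (a × b) (a × b) ℂ) : Prop :=
  ∃ (c : ℝ) (σ : Matrix (a × b) (a × b) ℂ), 0 ≤ c ∧ IsSep σ ∧ S = ((c : ℝ) : ℂ) • σ

/-- Maximally entangled state `Φ_d` on `ℂ^d ⊗ ℂ^d`. -/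
def PhiME (d : ℕ) : BOp d := fun p q => if p.1 = p.2 ∧ q.1 = q.2 then ((1 : ℂ) / d) else 0

/-- `τ_d = (𝟙 - Φ_d)/(d² - 1)`. -/
def tauME (d : ℕ) : BOp d := (((d : ℂ)^2 - 1))⁻¹ • (1 - PhiME d)

/-- Partial transpose on the second tensor factor. -/
def pt {a b : Type*} (A : Matrix (a × b) (a × b) ℂ) : Matrix (a × b) (a × b) ℂ :=
  fun p q => A (p.1, q.2) (q.1, p.2)

/-- Total positive-semidefinite square root (junk value `0` off the PSD cone). -/
noncomputable def msqrt {n : Type*} [Fintype n] [DecidableEq n] (A : Matrix n n ℂ) :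
    Matrix n n ℂ :=
  open scoped Classical in
  if h : A.PosSemidef then h.1.eigenvectorUnitary.1 * diagonal ((↑) ∘ (h.1.eigenvalues · |>.sqrt)) *
      (star h.1.eigenvectorUnitary : Matrix n n ℂ) else 0

/-- Trace norm `‖A‖₁ = Tr √(AᴴA)`. -/
noncomputable def traceNorm {n : Type*} [Fintype n] [DecidableEq n] (A : Matrix n n ℂ) : ℝ :=
  (msqrt (Aᴴ * A)).trace.re


/-- The swap operator `F` on `ℂ^d ⊗ ℂ^d`. -/
def swapOp (d : ℕ) : BOp d := fun p q => if p.1 = q.2 ∧ p.2 = q.1 then 1 else 0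

/-- Antisymmetric Werner state `α_d = (𝟙 - F)/(d(d-1))`. -/
noncomputable def alphaW (d : ℕ) : BOp d :=
  (((d : ℂ) * ((d : ℂ) - 1))⁻¹) • (1 - swapOp d)

/-- Symmetric Werner state `σ_d = (𝟙 + F)/(d(d+1))`. -/
noncomputable def sigW (d : ℕ) : BOp d :=
  (((d : ℂ) * ((d : ℂ) + 1))⁻¹) • (1 + swapOp d)

/-- Modified κ-entanglement, with the constraints written on the partial transposes. -/
noncomputable def EkappaG (d : ℕ) (ρ : BOp d) : ℝ :=
  Real.logb 2 (sInf {t : ℝ | ∃ S : BOp d,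
    InSepCone S ∧ loe (-(pt S)) (pt ρ) ∧ loe (pt ρ) (pt S) ∧ t = S.trace.re})

/-! `d²(d-1) S = d 𝟙 + (d-2) F` for `S = d⁻¹ α_d + (1 + d⁻¹) σ_d`, so `S + α_d` and `S - α_d` are
combinations of `𝟙` and `F`, and `F^Γ = dΦ` turns their partial transposes into nonnegative
multiples of the projections `𝟙 - Φ` and `Φ`.

For separability, average `|χ⟩⟨χ| ⊗ |χ⟩⟨χ|` over the `4^d` phase vectors
`χ ∈ {1, i, -1, -i}^d / √d`: the phases cancel unless the two row indices are a permutation of the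
two column indices, which gives `(𝟙 + F - D) / d²` with `D = Σ_a |aa⟩⟨aa|`. Hence
`d²(d-1) S = (d-2)(𝟙 + F - D) + 2 𝟙 + (d-2) D` is a nonnegative combination of product states.

Every feasible `S'` in the definition of `Ẽ_κ(ρ)` has `Tr S' ≥ Tr ρ`, so the infimum is positive
and `Ẽ_κ(α_d) ≤ log₂ Tr S = log₂ (1 + 2/d)`. -/

open Complex

section Positivity

variable {n : Type*} [Fintype n]

theorem Matrix.posSemidef_one_sub_of_isHermitian_of_mul_self_eq [DecidableEq n]
    {P : Matrix n n ℂ} (hP : P.IsHermitian) (hPP : P * P = P) : (1 - P).PosSemidef := by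
  have h : (1 - P)ᴴ * (1 - P) = 1 - P := by
    rw [conjTranspose_sub, conjTranspose_one, hP.eq]
    simp [sub_mul, mul_sub, hPP]
  exact h ▸ posSemidef_conjTranspose_mul_self (1 - P)

theorem isState_vecMulVec [DecidableEq n] {v : n → ℂ} (hv : star v ⬝ᵥ v = 1) :
    IsState (vecMulVec v (star v)) := by
  refine ⟨posSemidef_vecMulVec_self_star v, ?_⟩
  rw [← hv]
  simp [trace, vecMulVec_apply, dotProduct, mul_comm]

theorem trace_re_le_of_loe {A B : Matrix n n ℂ} (hAB : loe A B) :
    A.trace.re ≤ B.trace.re := by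
  have h := (Complex.le_def.mp hAB.trace_nonneg).1
  rw [trace_sub, Complex.sub_re] at h
  simpa [sub_nonneg] using h

end Positivity

section Separable

variable {a b ι : Type*} [Fintype a] [DecidableEq a] [Fintype b] [DecidableEq b] [Fintype ι]

theorem isSep_sum_kronecker (p : ι → ℝ) (A : ι → Matrix a a ℂ) (B : ι → Matrix b b ℂ)
    (hp : ∀ i, 0 ≤ p i) (hp_sum : ∑ i, p i = 1) (hA : ∀ i, IsState (A i))
    (hB : ∀ i, IsState (B i)) :
    IsSep (∑ i, ((p i : ℝ) : ℂ) • (A i ⊗ₖ B i)) := by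
  let e := (Fintype.equivFin ι).symm
  refine ⟨_, p ∘ e, A ∘ e, B ∘ e, fun _ => hp _, ?_, fun _ => hA _, fun _ => hB _,
    (e.sum_comp fun i => ((p i : ℝ) : ℂ) • (A i ⊗ₖ B i)).symm⟩
  rw [← hp_sum]
  exact e.sum_comp p

theorem inSepCone_sum_kronecker [Nonempty ι] (c : ι → ℝ) (A : ι → Matrix a a ℂ)
    (B : ι → Matrix b b ℂ) (hc : ∀ i, 0 ≤ c i) (hA : ∀ i, IsState (A i))
    (hB : ∀ i, IsState (B i)) :
    InSepCone (∑ i, ((c i : ℝ) : ℂ) • (A i ⊗ₖ B i)) := by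
  rcases (Finset.sum_nonneg fun i _ => hc i).eq_or_lt with hC | hC
  · obtain ⟨i₀⟩ := ‹Nonempty ι›
    have hzero : ∀ i, c i = 0 := fun i =>
      (Finset.sum_eq_zero_iff_of_nonneg fun i _ => hc i).mp hC.symm i (Finset.mem_univ i)
    refine ⟨0, A i₀ ⊗ₖ B i₀, le_rfl, ?_, by simp [hzero]⟩
    simpa using isSep_sum_kronecker (ι := Unit) (fun _ => 1) (fun _ => A i₀) (fun _ => B i₀)
      (fun _ => zero_le_one) (by simp) (fun _ => hA i₀) (fun _ => hB i₀)
  · refine ⟨∑ i, c i, ∑ i, ((c i / ∑ j, c j : ℝ) : ℂ) • (A i ⊗ₖ B i), hC.le,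
      isSep_sum_kronecker _ _ _ (fun i => div_nonneg (hc i) hC.le)
        (by rw [← Finset.sum_div, div_self hC.ne']) hA hB, ?_⟩
    rw [Finset.smul_sum]
    refine Finset.sum_congr rfl fun i _ => ?_
    rw [smul_smul, ← Complex.ofReal_mul, mul_div_cancel₀ _ hC.ne']

end Separable

section PartialTranspose

variable {a b : Type*}

@[simp]
theorem pt_add (A B : Matrix (a × b) (a × b) ℂ) : pt (A + B) = pt A + pt B := rfl

@[simp]
theorem pt_sub (A B : Matrix (a × b) (a × b) ℂ) : pt (A - B) = pt A - pt B := rfl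

@[simp]
theorem pt_smul (c : ℂ) (A : Matrix (a × b) (a × b) ℂ) : pt (c • A) = c • pt A := rfl

@[simp]
theorem pt_one [DecidableEq a] [DecidableEq b] : pt (1 : Matrix (a × b) (a × b) ℂ) = 1 := by
  ext ⟨i, j⟩ ⟨k, l⟩
  simp [pt, one_apply, eq_comm]

@[simp]
theorem trace_pt [Fintype a] [Fintype b] (A : Matrix (a × b) (a × b) ℂ) :
    (pt A).trace = A.trace := rfl

end PartialTranspose

theorem EkappaG_le_logb_trace {d : ℕ} {ρ S : BOp d} (hρ : 0 < ρ.trace.re) (hS : InSepCone S)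
    (hlow : loe (-(pt S)) (pt ρ)) (hupp : loe (pt ρ) (pt S)) :
    EkappaG d ρ ≤ Real.logb 2 S.trace.re := by
  have hbound : ∀ t ∈ {t : ℝ | ∃ S : BOp d,
      InSepCone S ∧ loe (-(pt S)) (pt ρ) ∧ loe (pt ρ) (pt S) ∧ t = S.trace.re},
      ρ.trace.re ≤ t := by
    rintro t ⟨S', -, -, hS', rfl⟩
    simpa only [trace_pt] using trace_re_le_of_loe hS'
  have hmem : ∃ S' : BOp d, InSepCone S' ∧ loe (-(pt S')) (pt ρ) ∧ loe (pt ρ) (pt S') ∧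
      S.trace.re = S'.trace.re := ⟨S, hS, hlow, hupp, rfl⟩
  exact Real.logb_le_logb_of_le one_lt_two (hρ.trans_le (le_csInf ⟨_, hmem⟩ hbound))
    (csInf_le ⟨_, hbound⟩ hmem)

section PhaseMoments

theorem sum_fin4_I_pow_mul_neg_I_pow {a b : ℕ} (ha : a ≤ 2) (hb : b ≤ 2) :
    ∑ t : Fin 4, I ^ ((t : ℕ) * a) * (-I) ^ ((t : ℕ) * b) = if a = b then 4 else 0 := by
  interval_cases a <;> interval_cases b <;>
    simp [Fin.sum_univ_four, pow_succ, I_mul_I] <;> ring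

variable {ι : Type*} [DecidableEq ι]

theorem eq_and_eq_or_eq_and_eq_of_indicator_add_eq {k l m n : ι}
    (h : ∀ j, ((if j = k then 1 else 0) + (if j = l then 1 else 0) : ℕ) =
      (if j = m then 1 else 0) + (if j = n then 1 else 0)) :
    (k = m ∧ l = n) ∨ (k = n ∧ l = m) := by
  have hk := h k
  have hl := h l
  by_cases h₁ : k = m <;> by_cases h₂ : l = n <;> by_cases h₃ : k = n <;> by_cases h₄ : l = m <;>
    simp_all

theorem sum_phase_moment [Fintype ι] (k l m n : ι) :
    ∑ χ : ι → Fin 4, I ^ (χ k : ℕ) * I ^ (χ l : ℕ) * (-I) ^ (χ m : ℕ) * (-I) ^ (χ n : ℕ) =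
      if (k = m ∧ l = n) ∨ (k = n ∧ l = m) then 4 ^ Fintype.card ι else 0 := by
  set a : ι → ℕ := fun j => (if j = k then 1 else 0) + (if j = l then 1 else 0)
  set b : ι → ℕ := fun j => (if j = m then 1 else 0) + (if j = n then 1 else 0)
  have hprod : ∀ χ : ι → Fin 4,
      I ^ (χ k : ℕ) * I ^ (χ l : ℕ) * (-I) ^ (χ m : ℕ) * (-I) ^ (χ n : ℕ) =
        ∏ j, I ^ ((χ j : ℕ) * a j) * (-I) ^ ((χ j : ℕ) * b j) := by
    intro χ
    simp only [Finset.prod_mul_distrib, Finset.prod_pow_eq_pow_sum, a, b, mul_add, mul_ite,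
      mul_one, mul_zero, Finset.sum_ite_eq', Finset.mem_univ, if_true, pow_add]
    ring
  have hfactor : ∀ j, ∑ t : Fin 4, I ^ ((t : ℕ) * a j) * (-I) ^ ((t : ℕ) * b j) =
      if a j = b j then 4 else 0 := fun j =>
    sum_fin4_I_pow_mul_neg_I_pow (by simp only [a]; split_ifs <;> omega)
      (by simp only [b]; split_ifs <;> omega)
  rw [Finset.sum_congr rfl fun χ _ => hprod χ, ← Fintype.prod_sum
    fun j (t : Fin 4) => I ^ ((t : ℕ) * a j) * (-I) ^ ((t : ℕ) * b j)]
  simp only [hfactor]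
  by_cases hab : ∀ j, a j = b j
  · rw [if_pos (eq_and_eq_or_eq_and_eq_of_indicator_add_eq hab)]
    simp [hab]
  · push Not at hab
    obtain ⟨j, hj⟩ := hab
    rw [Finset.prod_eq_zero (Finset.mem_univ j) (if_neg hj), if_neg]
    rintro (⟨rfl, rfl⟩ | ⟨rfl, rfl⟩) <;> simp [a, b, add_comm] at hj

end PhaseMoments

section Werner

variable {d : ℕ}

def kappaWitness (d : ℕ) : BOp d := ((d : ℂ))⁻¹ • alphaW d + (1 + ((d : ℂ))⁻¹) • sigW d

theorem natCast_sub_one_ne_zero (hd : 1 < d) : (d : ℂ) - 1 ≠ 0 :=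
  sub_ne_zero.mpr (by exact_mod_cast hd.ne')

def maxEntVec (d : ℕ) : Fin d × Fin d → ℂ := fun p => if p.1 = p.2 then 1 else 0

theorem PhiME_eq_smul_vecMulVec :
    PhiME d = ((d : ℂ))⁻¹ • vecMulVec (maxEntVec d) (star (maxEntVec d)) := by
  ext p q
  by_cases hp : p.1 = p.2 <;> by_cases hq : q.1 = q.2 <;>
    simp [PhiME, maxEntVec, vecMulVec_apply, hp, hq]

theorem star_maxEntVec_dotProduct : star (maxEntVec d) ⬝ᵥ maxEntVec d = d := by
  simp [maxEntVec, dotProduct, Fintype.sum_prod_type, apply_ite (star : ℂ → ℂ)]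

theorem PhiME_posSemidef : (PhiME d).PosSemidef := by
  rw [PhiME_eq_smul_vecMulVec]
  exact (posSemidef_vecMulVec_self_star _).smul (by simp)

theorem PhiME_mul_self : PhiME d * PhiME d = PhiME d := by
  rcases Nat.eq_zero_or_pos d with rfl | hd
  · exact Subsingleton.elim _ _
  rw [PhiME_eq_smul_vecMulVec, smul_mul_smul, vecMulVec_mul_vecMulVec, star_maxEntVec_dotProduct,
    vecMulVec_smul, smul_smul, mul_assoc, inv_mul_cancel₀ (Nat.cast_ne_zero.mpr hd.ne'), mul_one]

theorem one_sub_PhiME_posSemidef : ((1 : BOp d) - PhiME d).PosSemidef :=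
  posSemidef_one_sub_of_isHermitian_of_mul_self_eq PhiME_posSemidef.isHermitian PhiME_mul_self

theorem pt_swapOp : pt (swapOp d) = (d : ℂ) • PhiME d := by
  ext p q
  have hd : (d : ℂ) ≠ 0 := Nat.cast_ne_zero.mpr (Fin.pos p.1).ne'
  simp only [pt, swapOp, PhiME, Matrix.smul_apply, smul_eq_mul]
  split_ifs <;> simp_all [eq_comm]

theorem trace_swapOp : (swapOp d).trace = d := by
  rw [trace, Fintype.sum_prod_type]
  simp [swapOp, eq_comm]

theorem trace_alphaW (hd : 1 < d) : (alphaW d).trace = 1 := by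
  have h₀ : (d : ℂ) ≠ 0 := Nat.cast_ne_zero.mpr (by omega)
  have h₁ := natCast_sub_one_ne_zero hd
  rw [alphaW, trace_smul, trace_sub, trace_one, trace_swapOp, smul_eq_mul]
  simp only [Fintype.card_prod, Fintype.card_fin, Nat.cast_mul]
  field_simp

theorem kappaWitness_add_alphaW (hd : 1 < d) :
    kappaWitness d + alphaW d =
      (2 / ((d : ℂ) * ((d : ℂ) - 1))) • (1 - ((d : ℂ))⁻¹ • swapOp d) := by
  have h₀ : (d : ℂ) ≠ 0 := Nat.cast_ne_zero.mpr (by omega)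
  have h₁ := natCast_sub_one_ne_zero hd
  have h₂ : (d : ℂ) + 1 ≠ 0 := by exact_mod_cast (by omega : d + 1 ≠ 0)
  simp only [kappaWitness, alphaW, sigW]
  match_scalars <;> field_simp <;> ring

theorem kappaWitness_sub_alphaW (hd : 1 < d) :
    kappaWitness d - alphaW d = (2 / (d : ℂ) ^ 2) • swapOp d := by
  have h₀ : (d : ℂ) ≠ 0 := Nat.cast_ne_zero.mpr (by omega)
  have h₁ := natCast_sub_one_ne_zero hd
  have h₂ : (d : ℂ) + 1 ≠ 0 := by exact_mod_cast (by omega : d + 1 ≠ 0)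
  simp only [kappaWitness, alphaW, sigW]
  match_scalars <;> field_simp <;> ring

theorem trace_kappaWitness (hd : 1 < d) : (kappaWitness d).trace = 1 + 2 / (d : ℂ) := by
  have h₀ : (d : ℂ) ≠ 0 := Nat.cast_ne_zero.mpr (by omega)
  rw [← sub_add_cancel (kappaWitness d) (alphaW d), trace_add, kappaWitness_sub_alphaW hd,
    trace_smul, trace_swapOp, trace_alphaW hd, smul_eq_mul]
  field_simp
  ring

theorem pt_kappaWitness_add_pt_alphaW (hd : 1 < d) :
    pt (kappaWitness d) + pt (alphaW d) =
      (2 / ((d : ℂ) * ((d : ℂ) - 1))) • ((1 : BOp d) - PhiME d) := by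
  rw [← pt_add, kappaWitness_add_alphaW hd, pt_smul, pt_sub, pt_one, pt_smul, pt_swapOp,
    smul_smul, inv_mul_cancel₀ (Nat.cast_ne_zero.mpr (by omega)), one_smul]

theorem pt_kappaWitness_sub_pt_alphaW (hd : 1 < d) :
    pt (kappaWitness d) - pt (alphaW d) = (2 / (d : ℂ)) • PhiME d := by
  have h₀ : (d : ℂ) ≠ 0 := Nat.cast_ne_zero.mpr (by omega)
  rw [← pt_sub, kappaWitness_sub_alphaW hd, pt_smul, pt_swapOp, smul_smul]
  congr 1
  field_simp

theorem posSemidef_pt_kappaWitness_add_pt_alphaW (hd : 1 < d) :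
    (pt (kappaWitness d) + pt (alphaW d)).PosSemidef := by
  rw [pt_kappaWitness_add_pt_alphaW hd]
  exact one_sub_PhiME_posSemidef.smul <| div_nonneg zero_le_two <|
    mul_nonneg d.cast_nonneg (sub_nonneg.mpr (by exact_mod_cast hd.le))

theorem posSemidef_pt_kappaWitness_sub_pt_alphaW (hd : 1 < d) :
    (pt (kappaWitness d) - pt (alphaW d)).PosSemidef := by
  rw [pt_kappaWitness_sub_pt_alphaW hd]
  exact PhiME_posSemidef.smul (div_nonneg zero_le_two d.cast_nonneg)

end Werner

section Decomposition

variable {d : ℕ}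

def phaseVec (χ : Fin d → Fin 4) : Fin d → ℂ := fun j => I ^ (χ j : ℕ) * ((√(d : ℝ) : ℂ))⁻¹

theorem phaseVec_mul_star (χ : Fin d → Fin 4) (k m : Fin d) :
    phaseVec χ k * star (phaseVec χ m) = I ^ (χ k : ℕ) * (-I) ^ (χ m : ℕ) * ((d : ℂ))⁻¹ := by
  have hsqrt : ((√(d : ℝ) : ℂ))⁻¹ * ((√(d : ℝ) : ℂ))⁻¹ = ((d : ℂ))⁻¹ := by
    rw [← mul_inv, ← ofReal_mul, Real.mul_self_sqrt d.cast_nonneg, ofReal_natCast]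
  simp only [phaseVec, star_mul', star_pow, star_inv₀, RCLike.star_def, conj_I, conj_ofReal]
  rw [← hsqrt]
  ring

theorem star_phaseVec_dotProduct (hd : 0 < d) (χ : Fin d → Fin 4) :
    star (phaseVec χ) ⬝ᵥ phaseVec χ = 1 := by
  simp only [dotProduct, Pi.star_apply, mul_comm (star _), phaseVec_mul_star, ← mul_pow,
    mul_neg, I_mul_I, neg_neg, one_pow, one_mul, Finset.sum_const, Finset.card_univ,
    Fintype.card_fin, nsmul_eq_mul]
  exact mul_inv_cancel₀ (Nat.cast_ne_zero.mpr hd.ne')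

abbrev WernerIndex (d : ℕ) := (Fin d × Fin d) ⊕ (Fin d → Fin 4)

def wernerWeight (d : ℕ) : WernerIndex d → ℝ
  | .inl p => (2 + if p.1 = p.2 then (d : ℝ) - 2 else 0) / ((d : ℝ) ^ 2 * ((d : ℝ) - 1))
  | .inr _ => ((d : ℝ) - 2) / (((d : ℝ) - 1) * 4 ^ d)

def wernerVecFst : WernerIndex d → Fin d → ℂ
  | .inl p => Pi.single p.1 1
  | .inr χ => phaseVec χ

def wernerVecSnd : WernerIndex d → Fin d → ℂ
  | .inl p => Pi.single p.2 1
  | .inr χ => phaseVec χ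

theorem sum_basis_kronecker_apply {ι κ : Type*} [Fintype ι] [DecidableEq ι] [Fintype κ]
    [DecidableEq κ] (c : ι × κ → ℂ) (k m : ι) (l n : κ) :
    (∑ p : ι × κ, c p • (vecMulVec (Pi.single p.1 1) (star (Pi.single p.1 1)) ⊗ₖ
      vecMulVec (Pi.single p.2 (1 : ℂ)) (star (Pi.single p.2 1)))) (k, l) (m, n) =
      if k = m ∧ l = n then c (k, l) else 0 := by
  rw [Matrix.sum_apply, Finset.sum_eq_single (k, l)]
  · by_cases h₁ : k = m <;> by_cases h₂ : l = n <;> simp [vecMulVec_apply, h₁, h₂]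
  · rintro ⟨a, b⟩ - hab
    by_cases h₁ : k = a <;> by_cases h₂ : l = b <;> simp_all [vecMulVec_apply, Pi.single_apply]
  · simp

theorem sum_phaseVec_kronecker_apply (k l m n : Fin d) :
    (∑ χ : Fin d → Fin 4, vecMulVec (phaseVec χ) (star (phaseVec χ)) ⊗ₖ
      vecMulVec (phaseVec χ) (star (phaseVec χ))) (k, l) (m, n) =
      if (k = m ∧ l = n) ∨ (k = n ∧ l = m) then 4 ^ d / (d : ℂ) ^ 2 else 0 := by
  have hterm : ∀ χ : Fin d → Fin 4, (vecMulVec (phaseVec χ) (star (phaseVec χ)) ⊗ₖ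
      vecMulVec (phaseVec χ) (star (phaseVec χ))) (k, l) (m, n) =
      I ^ (χ k : ℕ) * I ^ (χ l : ℕ) * (-I) ^ (χ m : ℕ) * (-I) ^ (χ n : ℕ) / (d : ℂ) ^ 2 := by
    intro χ
    simp only [kroneckerMap_apply, vecMulVec_apply, Pi.star_apply, phaseVec_mul_star]
    ring
  rw [Matrix.sum_apply, Finset.sum_congr rfl fun χ _ => hterm χ, ← Finset.sum_div,
    sum_phase_moment, Fintype.card_fin]
  split_ifs <;> simp

theorem kappaWitness_apply (hd : 1 < d) (k l m n : Fin d) :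
    kappaWitness d (k, l) (m, n) =
      ((if k = m ∧ l = n then (d : ℂ) else 0) + if k = n ∧ l = m then (d : ℂ) - 2 else 0) /
        ((d : ℂ) ^ 2 * ((d : ℂ) - 1)) := by
  have h₀ : (d : ℂ) ≠ 0 := Nat.cast_ne_zero.mpr (by omega)
  have h₁ := natCast_sub_one_ne_zero hd
  rw [← sub_add_cancel (kappaWitness d) (alphaW d), kappaWitness_sub_alphaW hd]
  simp only [alphaW, swapOp, Matrix.add_apply, Matrix.smul_apply, Matrix.sub_apply, one_apply,
    Prod.mk.injEq, smul_eq_mul]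
  split_ifs <;> field_simp <;> ring

theorem kappaWitness_eq_sum_kronecker (hd : 1 < d) :
    kappaWitness d = ∑ x, ((wernerWeight d x : ℝ) : ℂ) •
      (vecMulVec (wernerVecFst x) (star (wernerVecFst x)) ⊗ₖ
        vecMulVec (wernerVecSnd x) (star (wernerVecSnd x))) := by
  have h₀ : (d : ℂ) ≠ 0 := Nat.cast_ne_zero.mpr (by omega)
  have h₁ := natCast_sub_one_ne_zero hd
  ext ⟨k, l⟩ ⟨m, n⟩
  rw [Fintype.sum_sum_type, Matrix.add_apply]
  simp only [wernerWeight, wernerVecFst, wernerVecSnd]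
  rw [sum_basis_kronecker_apply, ← Finset.smul_sum, Matrix.smul_apply,
    sum_phaseVec_kronecker_apply, kappaWitness_apply hd]
  push_cast
  by_cases hA : k = m ∧ l = n <;> by_cases hB : k = n ∧ l = m
  · obtain ⟨rfl, rfl⟩ := hA
    obtain ⟨rfl, -⟩ := hB
    simp
    field_simp
  · obtain ⟨rfl, rfl⟩ := hA
    have hkl : k ≠ l := fun h => hB ⟨h, h.symm⟩
    simp [hkl]
    field_simp
    ring
  · rw [if_neg hA, if_pos hB, if_neg hA, if_pos (Or.inr hB), smul_eq_mul]
    field_simp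
    ring
  · rw [if_neg hA, if_neg hB, if_neg hA, if_neg (not_or.mpr ⟨hA, hB⟩)]
    simp

theorem wernerWeight_nonneg (hd : 1 < d) (x : WernerIndex d) : 0 ≤ wernerWeight d x := by
  have h₂ : (2 : ℝ) ≤ d := by exact_mod_cast hd
  rcases x with p | χ <;> simp only [wernerWeight]
  · apply div_nonneg _ (mul_nonneg (sq_nonneg _) (by linarith))
    split_ifs <;> linarith
  · exact div_nonneg (by linarith) (mul_nonneg (by linarith) (by positivity))

theorem star_wernerVecFst_dotProduct (hd : 0 < d) (x : WernerIndex d) :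
    star (wernerVecFst x) ⬝ᵥ wernerVecFst x = 1 := by
  rcases x with p | χ
  · simp [wernerVecFst]
  · exact star_phaseVec_dotProduct hd χ

theorem star_wernerVecSnd_dotProduct (hd : 0 < d) (x : WernerIndex d) :
    star (wernerVecSnd x) ⬝ᵥ wernerVecSnd x = 1 := by
  rcases x with p | χ
  · simp [wernerVecSnd]
  · exact star_phaseVec_dotProduct hd χ

theorem inSepCone_kappaWitness (hd : 1 < d) : InSepCone (kappaWitness d) := by
  rw [kappaWitness_eq_sum_kronecker hd]
  have : Nonempty (WernerIndex d) := ⟨.inr 0⟩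
  exact inSepCone_sum_kronecker _ _ _ (wernerWeight_nonneg hd)
    (fun x => isState_vecMulVec (star_wernerVecFst_dotProduct (by omega) x))
    (fun x => isState_vecMulVec (star_wernerVecSnd_dotProduct (by omega) x))

end Decomposition

theorem stmt18 (d : ℕ) (hd : 1 < d) :
    InSepCone (((d : ℂ))⁻¹ • alphaW d + (1 + ((d : ℂ))⁻¹) • sigW d) ∧
    pt (((d : ℂ))⁻¹ • alphaW d + (1 + ((d : ℂ))⁻¹) • sigW d) + pt (alphaW d) =
      (2 / ((d : ℂ) * ((d : ℂ) - 1))) • ((1 : BOp d) - PhiME d) ∧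
    (pt (((d : ℂ))⁻¹ • alphaW d + (1 + ((d : ℂ))⁻¹) • sigW d) + pt (alphaW d)).PosSemidef ∧
    pt (((d : ℂ))⁻¹ • alphaW d + (1 + ((d : ℂ))⁻¹) • sigW d) - pt (alphaW d) =
      (2 / (d : ℂ)) • PhiME d ∧
    (pt (((d : ℂ))⁻¹ • alphaW d + (1 + ((d : ℂ))⁻¹) • sigW d) - pt (alphaW d)).PosSemidef ∧
    (((d : ℂ))⁻¹ • alphaW d + (1 + ((d : ℂ))⁻¹) • sigW d).trace = 1 + 2 / (d : ℂ) ∧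
    EkappaG d (alphaW d) ≤ Real.logb 2 (1 + 2 / (d : ℝ)) := by
  have htrace_re : (kappaWitness d).trace.re = 1 + 2 / (d : ℝ) := by
    rw [trace_kappaWitness hd]
    simp
  have hlow : loe (-(pt (kappaWitness d))) (pt (alphaW d)) := by
    rw [loe, sub_neg_eq_add, add_comm]
    exact posSemidef_pt_kappaWitness_add_pt_alphaW hd
  refine ⟨inSepCone_kappaWitness hd, pt_kappaWitness_add_pt_alphaW hd,
    posSemidef_pt_kappaWitness_add_pt_alphaW hd, pt_kappaWitness_sub_pt_alphaW hd,
    posSemidef_pt_kappaWitness_sub_pt_alphaW hd, trace_kappaWitness hd, ?_⟩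
  rw [← htrace_re]
  exact EkappaG_le_logb_trace (by simp [trace_alphaW hd]) (inSepCone_kappaWitness hd) hlow
    (posSemidef_pt_kappaWitness_sub_pt_alphaW hd)

end
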